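/- Let ρ be a symmetric probability measure on ℝ which is not the Dirac mass at 0, and let μ be a probability measure on ℝ with finite first moment. Then H(μ|ρ) ≥ (∫ z dμ(z))² / (2 ∫ z² dμ(z)), with equality if and only if μ = ρ; here the right-hand side is interpreted as 0 when the second moment of μ is infinite, and H(μ|ρ) = +∞ when μ is not absolutely continuous with respect to ρ. -/

import Mathlib

/-!
By the Donsker–Varadhan inequality, `H(μ|ρ) ≥ ∫ g dμ - log ∫ exp g dρ` for every test function `g`.
With `m`, `s` the first two moments of `μ` and `l = m / s`, the choice `g z = l z - (l z)² / 2`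
gives `∫ g dμ = m² / (2 s)`. Since `ρ` is symmetric, `∫ exp g dρ = ∫ cosh (l z) exp (-(l z)² / 2) dρ`,
and `cosh x < exp (x² / 2)` for `x ≠ 0`, so this is `< 1` unless `ρ = δ₀`: the bound is strict
whenever `m ≠ 0`. When `m = 0` (or `s = ∞`) the bound is Gibbs' inequality `H ≥ 0`, with
equality iff `μ = ρ`; and `μ = ρ` forces `m = 0` by symmetry.
-/

open MeasureTheory Classical

/-- The relative entropy (Kullback–Leibler divergence) of `μ` with respect to `ρ`,
as an extended real number: `∫ f log f dρ` if `μ ≪ ρ` with `f = dμ/dρ` and this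
integral makes sense, and `+∞` otherwise. -/
noncomputable def relEntropy (μ ρ : MeasureTheory.Measure ℝ) : EReal :=
  if μ ≪ ρ ∧ Integrable
      (fun z => (μ.rnDeriv ρ z).toReal * Real.log (μ.rnDeriv ρ z).toReal) ρ then
    ((∫ z, (μ.rnDeriv ρ z).toReal * Real.log (μ.rnDeriv ρ z).toReal ∂ρ : ℝ) : EReal)
  else ⊤

open Real InformationTheory

lemma relEntropy_eq_klDiv (μ ρ : Measure ℝ) [IsProbabilityMeasure μ] [IsProbabilityMeasure ρ] :
    relEntropy μ ρ = klDiv μ ρ := by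
  by_cases hac : μ ≪ ρ
  swap
  · simp [relEntropy, hac]
  have hfun : (fun z => (μ.rnDeriv ρ z).toReal * log (μ.rnDeriv ρ z).toReal)
      = fun z => (μ.rnDeriv ρ z).toReal • llr μ ρ z := rfl
  by_cases hint : Integrable (llr μ ρ) μ
  · have hgibbs := integral_llr_add_sub_measure_univ_nonneg hac hint
    simp only [probReal_univ, add_sub_cancel_right] at hgibbs
    rw [relEntropy, hfun, if_pos ⟨hac, (integrable_rnDeriv_smul_iff hac).2 hint⟩,
      integral_rnDeriv_smul hac, klDiv_of_ac_of_integrable hac hint]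
    simp [EReal.coe_ennreal_ofReal, hgibbs]
  · rw [relEntropy, hfun, integrable_rnDeriv_smul_iff hac, klDiv_of_not_integrable hint]
    simp [hint]

lemma integral_sub_log_integral_exp_le_klDiv {α : Type*} [MeasurableSpace α] {μ ν : Measure α}
    [IsProbabilityMeasure μ] [IsProbabilityMeasure ν] {g : α → ℝ} (hgμ : Integrable g μ)
    (hgν : Integrable (fun x => exp (g x)) ν) :
    ((∫ x, g x ∂μ - log (∫ x, exp (g x) ∂ν) : ℝ) : EReal) ≤ klDiv μ ν := by
  by_cases h : μ ≪ ν ∧ Integrable (llr μ ν) μ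
  swap
  · rw [(klDiv_eq_top_iff).2 fun hac hint => h ⟨hac, hint⟩]
    exact le_top
  obtain ⟨hac, hint⟩ := h
  -- Gibbs' inequality for `μ` against the tilted measure `ν.tilted g ∝ exp g • ν`.
  have : IsProbabilityMeasure (ν.tilted g) := isProbabilityMeasure_tilted hgν
  have hgibbs := integral_llr_add_sub_measure_univ_nonneg
    (hac.trans (absolutelyContinuous_tilted hgν)) (integrable_llr_tilted_right hac hgμ hint hgν)
  rw [integral_llr_tilted_right hac hgμ hgν hint] at hgibbs
  simp only [probReal_univ, add_sub_cancel_right] at hgibbs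
  rw [klDiv_of_ac_of_integrable hac hint, EReal.coe_ennreal_ofReal]
  simp only [probReal_univ, add_sub_cancel_right]
  exact EReal.coe_le_coe_iff.2 (le_max_of_le_left (by linarith))

lemma cosh_lt_exp_half_sq {x : ℝ} (hx : x ≠ 0) : cosh x < exp (x ^ 2 / 2) := by
  -- Apply `cosh ≤ exp (· ^ 2 / 2)` at `x / 2` and use `cosh x = 2 cosh² (x / 2) - 1`.
  set t := exp (x ^ 2 / 8)
  have ht : 1 < t := one_lt_exp_iff.2 (by positivity)
  have hhalf : cosh (x / 2) ≤ t := by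
    convert cosh_le_exp_half_sq (x / 2) using 2
    ring
  have hdouble : cosh x = 2 * cosh (x / 2) ^ 2 - 1 := by
    have h := cosh_two_mul (x / 2)
    rw [mul_div_cancel₀ x two_ne_zero] at h
    rw [h, cosh_sq]
    ring
  have hexp : exp (x ^ 2 / 2) = t ^ 4 := by
    rw [← exp_nat_mul]
    ring_nf
  rw [hdouble, hexp]
  nlinarith [cosh_pos (x / 2), sq_pos_of_pos (sub_pos.2 ht), mul_pos (sub_pos.2 ht) (sub_pos.2 ht)]

lemma exp_sub_sq_half_add_exp_neg_sub_sq_half (x : ℝ) :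
    exp (x - x ^ 2 / 2) + exp (-x - (-x) ^ 2 / 2) = 2 * (cosh x / exp (x ^ 2 / 2)) := by
  rw [neg_sq, cosh_eq, sub_eq_add_neg, sub_eq_add_neg, exp_add, exp_add, exp_neg (x ^ 2 / 2)]
  ring

lemma integrable_exp_sub_sq_half {α : Type*} [MeasurableSpace α] {ρ : Measure α}
    [IsFiniteMeasure ρ] {f : α → ℝ} (hf : AEStronglyMeasurable f ρ) :
    Integrable (fun x => exp (f x - f x ^ 2 / 2)) ρ := by
  refine Integrable.of_bound ((continuous_exp.comp (by fun_prop : Continuous fun y : ℝ =>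
    y - y ^ 2 / 2)).comp_aestronglyMeasurable hf) (exp (1 / 2)) (ae_of_all _ fun x => ?_)
  rw [norm_of_nonneg (exp_pos _).le, exp_le_exp]
  nlinarith [sq_nonneg (f x - 1)]

lemma eq_dirac_of_ae_eq {α : Type*} [MeasurableSpace α] {ρ : Measure α} [IsProbabilityMeasure ρ]
    {a : α} (h : ∀ᵐ x ∂ρ, x = a) : ρ = Measure.dirac a := by
  calc ρ = ρ.map id := Measure.map_id.symm
    _ = ρ.map (fun _ => a) := Measure.map_congr h
    _ = Measure.dirac a := by simp [Measure.map_const]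

lemma integral_lt_of_ne_dirac {α : Type*} [MeasurableSpace α] {ρ : Measure α}
    [IsProbabilityMeasure ρ] {a : α} (hρ : ρ ≠ Measure.dirac a) {g : α → ℝ} {c : ℝ}
    (hg : Integrable g ρ) (hle : ∀ x, g x ≤ c) (hlt : ∀ x, x ≠ a → g x < c) :
    ∫ x, g x ∂ρ < c := by
  have hle_int : ∫ x, g x ∂ρ ≤ c := by
    simpa using integral_mono hg (integrable_const c) hle
  refine hle_int.lt_of_ne fun heq => hρ (eq_dirac_of_ae_eq ?_)
  have hgap : (fun x => c - g x) =ᵐ[ρ] 0 := by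
    refine (integral_eq_zero_iff_of_nonneg (fun x => sub_nonneg.2 (hle x))
      ((integrable_const c).sub hg)).1 ?_
    rw [integral_sub (integrable_const c) hg, heq]
    simp
  filter_upwards [hgap] with x hx
  by_contra hxa
  linarith [hlt x hxa, show c - g x = 0 from hx]

lemma integral_id_eq_zero_of_isNegInvariant {E : Type*} [NormedAddCommGroup E] [NormedSpace ℝ E]
    [MeasurableSpace E] [MeasurableNeg E] (ρ : Measure E) [ρ.IsNegInvariant] :
    ∫ x, x ∂ρ = 0 := by
  have h := integral_neg_eq_self (fun x => x) ρ
  rw [integral_neg, neg_eq_iff_add_eq_zero, ← two_smul ℝ] at h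
  exact (smul_eq_zero.1 h).resolve_left two_ne_zero

lemma integral_exp_mul_sub_sq_half_lt_one {ρ : Measure ℝ} [IsProbabilityMeasure ρ]
    [ρ.IsNegInvariant] (hρ : ρ ≠ Measure.dirac 0) {l : ℝ} (hl : l ≠ 0) :
    ∫ z, exp (l * z - (l * z) ^ 2 / 2) ∂ρ < 1 := by
  -- By symmetry of `ρ` only the even part `cosh x / exp (x ^ 2 / 2)` of `φ` matters,
  -- and it is `< 1` off `x = 0`.
  set φ : ℝ → ℝ := fun x => exp (x - x ^ 2 / 2)
  have hint : Integrable (fun z => φ (l * z)) ρ := integrable_exp_sub_sq_half (by fun_prop)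
  have hint' : Integrable (fun z => φ (-(l * z))) ρ := integrable_exp_sub_sq_half (by fun_prop)
  have hsymm : ∫ z, φ (l * z) ∂ρ = ∫ z, (φ (l * z) + φ (-(l * z))) / 2 ∂ρ := by
    have h := integral_neg_eq_self (fun z => φ (l * z)) ρ
    simp only [mul_neg] at h
    rw [integral_div, integral_add hint hint', h]
    ring
  change ∫ z, φ (l * z) ∂ρ < 1
  rw [hsymm]
  refine integral_lt_of_ne_dirac hρ ((hint.add hint').div_const 2) (fun z => ?_) (fun z hz => ?_)
  · rw [div_le_one two_pos, exp_sub_sq_half_add_exp_neg_sub_sq_half]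
    linarith [(div_le_one (exp_pos _)).2 (cosh_le_exp_half_sq (l * z))]
  · rw [div_lt_one two_pos, exp_sub_sq_half_add_exp_neg_sub_sq_half]
    linarith [(div_lt_one (exp_pos _)).2 (cosh_lt_exp_half_sq (mul_ne_zero hl hz))]

lemma integral_sq_pos_of_integral_ne_zero {μ : Measure ℝ} (hm2 : Integrable (fun z => z ^ 2) μ)
    (hm : ∫ z, z ∂μ ≠ 0) : 0 < ∫ z, z ^ 2 ∂μ := by
  refine (integral_nonneg fun z => sq_nonneg z).lt_of_ne fun hs => hm ?_
  have hsq := (integral_eq_zero_iff_of_nonneg (fun z => sq_nonneg z) hm2).1 hs.symm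
  rw [integral_congr_ae (hsq.mono fun z hz => pow_eq_zero_iff two_ne_zero |>.1 hz), integral_zero]

lemma sq_integral_div_lt_klDiv {ρ μ : Measure ℝ} [IsProbabilityMeasure ρ] [IsProbabilityMeasure μ]
    [ρ.IsNegInvariant] (hρ : ρ ≠ Measure.dirac 0) (hm1 : Integrable (fun z => z) μ)
    (hm2 : Integrable (fun z => z ^ 2) μ) (hm : ∫ z, z ∂μ ≠ 0) :
    (((∫ z, z ∂μ) ^ 2 / (2 * ∫ z, z ^ 2 ∂μ) : ℝ) : EReal) < klDiv μ ρ := by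
  set m := ∫ z, z ∂μ
  set s := ∫ z, z ^ 2 ∂μ
  have hs : 0 < s := integral_sq_pos_of_integral_ne_zero hm2 hm
  -- Donsker–Varadhan with the test function `g z = l z - (l z)² / 2`, where `l = m / s`
  -- maximizes `∫ g dμ = l m - l² s / 2`.
  set l := m / s
  set g : ℝ → ℝ := fun z => l * z - (l * z) ^ 2 / 2
  have hg_eq : g = fun z => l * z - l ^ 2 / 2 * z ^ 2 := funext fun z => by ring
  have hgμ : Integrable g μ := hg_eq ▸ (hm1.const_mul l).sub (hm2.const_mul (l ^ 2 / 2))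
  have hgν : Integrable (fun z => exp (g z)) ρ := integrable_exp_sub_sq_half (by fun_prop)
  have hmean : ∫ z, g z ∂μ = m ^ 2 / (2 * s) := by
    rw [hg_eq, integral_sub (hm1.const_mul l) (hm2.const_mul (l ^ 2 / 2)), integral_const_mul,
      integral_const_mul]
    change l * m - l ^ 2 / 2 * s = _
    simp only [l]
    field_simp
    ring
  have hlog : log (∫ z, exp (g z) ∂ρ) < 0 :=
    log_neg (integral_exp_pos hgν) (integral_exp_mul_sub_sq_half_lt_one hρ (div_ne_zero hm hs.ne'))
  calc ((m ^ 2 / (2 * s) : ℝ) : EReal) < ((∫ z, g z ∂μ - log (∫ z, exp (g z) ∂ρ) : ℝ) : EReal) :=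
        EReal.coe_lt_coe_iff.2 (by linarith)
    _ ≤ klDiv μ ρ := integral_sub_log_integral_exp_le_klDiv hgμ hgν

theorem main_inequality_general
    (ρ μ : Measure ℝ) [IsProbabilityMeasure ρ] [IsProbabilityMeasure μ]
    (hsym : ρ.map (fun z => -z) = ρ)
    (hρ : ρ ≠ Measure.dirac 0)
    (hm1 : Integrable (fun z => z) μ) :
    (((∫ z, z ∂μ) ^ 2 / (2 * ∫ z, z ^ 2 ∂μ) : ℝ) : EReal) ≤ relEntropy μ ρ
      ∧ (relEntropy μ ρ = (((∫ z, z ∂μ) ^ 2 / (2 * ∫ z, z ^ 2 ∂μ) : ℝ) : EReal)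
          ↔ μ = ρ) := by
  have : ρ.IsNegInvariant := ⟨hsym⟩
  rw [relEntropy_eq_klDiv]
  set R := (∫ z, z ∂μ) ^ 2 / (2 * ∫ z, z ^ 2 ∂μ)
  have hR : R = 0 ∨ (R : EReal) < klDiv μ ρ := by
    by_cases hm : ∫ z, z ∂μ = 0
    · simp [R, hm]
    by_cases hm2 : Integrable (fun z => z ^ 2) μ
    · exact Or.inr (sq_integral_div_lt_klDiv hρ hm1 hm2 hm)
    · simp [R, integral_undef hm2]
  refine ⟨?_, fun h => ?_, fun h => ?_⟩
  · rcases hR with hR | hR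
    · exact hR ▸ EReal.coe_ennreal_nonneg _
    · exact hR.le
  · rcases hR with hR | hR
    · rw [hR] at h
      exact klDiv_eq_zero_iff.1 (EReal.coe_ennreal_eq_zero.1 h)
    · exact absurd h hR.ne'
  · subst h
    simp [R, integral_id_eq_zero_of_isNegInvariant]

theorem main_inequality
    (ρ μ : Measure ℝ) [IsProbabilityMeasure ρ] [IsProbabilityMeasure μ]
    (hsym : ρ.map (fun z => -z) = ρ)
    (hρ : ρ ≠ Measure.dirac 0) (hμ : μ ≠ Measure.dirac 0)
    (hm1 : Integrable (fun z => z) μ) :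
    (((∫ z, z ∂μ) ^ 2 / (2 * ∫ z, z ^ 2 ∂μ) : ℝ) : EReal) ≤ relEntropy μ ρ
      ∧ (relEntropy μ ρ = (((∫ z, z ∂μ) ^ 2 / (2 * ∫ z, z ^ 2 ∂μ) : ℝ) : EReal)
          ↔ μ = ρ) :=
  main_inequality_general ρ μ hsym hρ hm1
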